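/- For a hidden Markov model whose hidden-state set ℋ has cardinality H, for every 1 ≤ t ≤ T the mutual information between the prefix and the suffix of the observation sequence is bounded by the logarithm of the hidden size: I(X_{1:t}; X_{t+1:T}) ≤ log H. -/

import Mathlib

open scoped Classical

noncomputable section

/-- A hidden Markov model over a finite hidden-state set `H` and a finite
vocabulary `V`: an initial distribution `pi`, a row-stochastic transition
matrix `A`, and a row-stochastic emission matrix `B`. -/
structure HMM (H V : Type*) [Fintype H] [Fintype V] where
  pi : H → ℝ
  A : H → H → ℝ
  B : H → V → ℝ
  pi_nonneg : ∀ z, 0 ≤ pi z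
  A_nonneg : ∀ z z', 0 ≤ A z z'
  B_nonneg : ∀ z x, 0 ≤ B z x
  pi_sum_one : ∑ z, pi z = 1
  A_row_sum_one : ∀ z, ∑ z', A z z' = 1
  B_row_sum_one : ∀ z, ∑ x, B z x = 1

namespace HMM

variable {H V : Type*} [Fintype H] [Fintype V]

/-- The joint probability of a latent-state sequence `z` and an observation
sequence `x` of length `T + 1` (positions are indexed `0, …, T`):
`q(z, x) = π(z₀) B(z₀, x₀) ∏ᵢ A(zᵢ, zᵢ₊₁) B(zᵢ₊₁, xᵢ₊₁)`. -/
def joint (M : HMM H V) (T : ℕ) (z : Fin (T + 1) → H) (x : Fin (T + 1) → V) : ℝ :=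
  M.pi (z 0) * M.B (z 0) (x 0) *
    ∏ i : Fin T, (M.A (z i.castSucc) (z i.succ) * M.B (z i.succ) (x i.succ))

/-- The probability of an event `E` over latent-state and observation
sequences, obtained by summing the joint distribution. -/
def prob (M : HMM H V) (T : ℕ)
    (E : (Fin (T + 1) → H) → (Fin (T + 1) → V) → Prop) : ℝ :=
  ∑ z : Fin (T + 1) → H, ∑ x : Fin (T + 1) → V, if E z x then M.joint T z x else 0

end HMM

/-- Probability that a random variable `Z` on a finite, finitely-supported
probability space with weights `p` takes the value `z`. -/
def prOf {Ω : Type*} {γ : Type*} [Fintype Ω] (p : Ω → ℝ) (Z : Ω → γ) (z : γ) : ℝ :=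
  ∑ ω, if Z ω = z then p ω else 0

/-- Mutual information
`I(X;Y) = Σ_{x,y} P(X=x,Y=y) log (P(X=x,Y=y) / (P(X=x) P(Y=y)))`,
with terms equal to `0` when `P(X=x,Y=y) = 0`. -/
def mutualInfo {Ω α β : Type*} [Fintype Ω] [Fintype α] [Fintype β]
    (p : Ω → ℝ) (X : Ω → α) (Y : Ω → β) : ℝ :=
  ∑ a : α, ∑ b : β,
    if prOf p (fun ω => (X ω, Y ω)) (a, b) = 0 then 0
    else prOf p (fun ω => (X ω, Y ω)) (a, b) *
      Real.log (prOf p (fun ω => (X ω, Y ω)) (a, b) / (prOf p X a * prOf p Y b))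


namespace HMMaux

open Finset

lemma entropy_le_log_card {γ : Type*} [Fintype γ] (lam : γ → ℝ)
    (h0 : ∀ z, 0 ≤ lam z) (h1 : ∑ z, lam z = 1) :
    ∑ z, lam z * Real.log (1 / lam z) ≤ Real.log (Fintype.card γ) := by
  have hne : Nonempty γ := by
    by_contra h
    rw [not_nonempty_iff] at h
    rw [Finset.univ_eq_empty, Finset.sum_empty] at h1
    norm_num at h1
  have hN : (0:ℝ) < (Fintype.card γ : ℝ) := by
    have := Fintype.card_pos (α := γ)
    positivity
  set N : ℝ := (Fintype.card γ : ℝ) with hNdef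
  have key : ∀ z, lam z * Real.log (1 / lam z) ≤
      lam z * Real.log N + (if lam z = 0 then 0 else (1 / N - lam z)) := by
    intro z
    by_cases hz : lam z = 0
    · simp [hz]
    · have hzpos : 0 < lam z := lt_of_le_of_ne (h0 z) (Ne.symm hz)
      rw [if_neg hz]
      have hlog : Real.log (1 / lam z) = Real.log N + Real.log (1 / (lam z * N)) := by
        rw [one_div, one_div, Real.log_inv, Real.log_inv, Real.log_mul hz (ne_of_gt hN)]
        ring
      have hle : Real.log (1 / (lam z * N)) ≤ 1 / (lam z * N) - 1 :=
        Real.log_le_sub_one_of_pos (by positivity)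
      have h2 : lam z * Real.log (1 / (lam z * N)) ≤ 1 / N - lam z := by
        have := mul_le_mul_of_nonneg_left hle (le_of_lt hzpos)
        have heq : lam z * (1 / (lam z * N) - 1) = 1 / N - lam z := by
          field_simp
        linarith [this, heq.le, heq.ge]
      rw [hlog]
      nlinarith [h2]
  calc ∑ z, lam z * Real.log (1 / lam z)
      ≤ ∑ z, (lam z * Real.log N + (if lam z = 0 then 0 else (1 / N - lam z))) :=
        Finset.sum_le_sum fun z _ => key z
    _ = Real.log N + ∑ z, (if lam z = 0 then 0 else (1 / N - lam z)) := by
        rw [Finset.sum_add_distrib, ← Finset.sum_mul, h1, one_mul]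
    _ ≤ Real.log N + 0 := by
        gcongr
        have hrw : ∑ z, (if lam z = 0 then 0 else (1 / N - lam z))
            = ∑ z ∈ univ.filter (fun z => lam z ≠ 0), (1 / N - lam z) := by
          rw [Finset.sum_filter]
          apply Finset.sum_congr rfl
          intro z _
          by_cases hz : lam z = 0 <;> simp [hz]
        rw [hrw, Finset.sum_sub_distrib, Finset.sum_const, nsmul_eq_mul]
        have hcard : ((univ.filter (fun z => lam z ≠ 0)).card : ℝ) ≤ N := by
          rw [hNdef]
          exact_mod_cast Finset.card_filter_le _ _
        have hsum : ∑ z ∈ univ.filter (fun z => lam z ≠ 0), lam z = 1 := by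
          rw [Finset.sum_filter_ne_zero, h1]
        rw [hsum]
        have : ((univ.filter (fun z => lam z ≠ 0)).card : ℝ) * (1 / N) ≤ N * (1 / N) := by
          apply mul_le_mul_of_nonneg_right hcard
          positivity
        rw [mul_one_div (N:ℝ), div_self (ne_of_gt hN)] at this
        rw [mul_one_div] at this ⊢
        linarith
    _ = Real.log N := add_zero _

lemma key_info {α β γ : Type*} [Fintype α] [Fintype β] [Fintype γ]
    (F : γ → α → ℝ) (G : γ → β → ℝ)
    (hF : ∀ z a, 0 ≤ F z a) (hG : ∀ z b, 0 ≤ G z b)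
    (hG1 : ∀ z, ∑ b, G z b = 1) (hF1 : ∑ z, ∑ a, F z a = 1)
    (entropy_le_log_card : ∀ (lam : γ → ℝ), (∀ z, 0 ≤ lam z) → (∑ z, lam z = 1) →
      ∑ z, lam z * Real.log (1 / lam z) ≤ Real.log (Fintype.card γ)) :
    ∑ a, ∑ b, (if (∑ z, F z a * G z b) = 0 then 0 else
      (∑ z, F z a * G z b) *
        Real.log ((∑ z, F z a * G z b) /
          ((∑ z, F z a) * (∑ z, (∑ a', F z a') * G z b)))) ≤ Real.log (Fintype.card γ) := by
  set lam : γ → ℝ := fun z => ∑ a, F z a with hlamdef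
  have hlam0 : ∀ z, 0 ≤ lam z := fun z => Finset.sum_nonneg fun a _ => hF z a
  have step1 : ∀ a b, (if (∑ z, F z a * G z b) = 0 then 0 else
      (∑ z, F z a * G z b) *
        Real.log ((∑ z, F z a * G z b) /
          ((∑ z, F z a) * (∑ z, (∑ a', F z a') * G z b))))
      ≤ ∑ z, F z a * G z b * Real.log (1 / lam z) := by
    intro a b
    by_cases hP : (∑ z, F z a * G z b) = 0
    · rw [if_pos hP]
      have hz : ∀ z ∈ (univ : Finset γ), F z a * G z b = 0 :=
        fun z hzz => (Finset.sum_eq_zero_iff_of_nonneg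
          (fun z _ => mul_nonneg (hF z a) (hG z b))).1 hP z hzz
      rw [Finset.sum_eq_zero fun z hzz => by rw [hz z hzz, zero_mul]]
    · rw [if_neg hP]
      have hPpos : 0 < ∑ z, F z a * G z b :=
        lt_of_le_of_ne (Finset.sum_nonneg fun z _ => mul_nonneg (hF z a) (hG z b)) (Ne.symm hP)
      obtain ⟨z₀, -, hz₀⟩ : ∃ z ∈ (univ : Finset γ), 0 < F z a * G z b := by
        by_contra h
        push_neg at h
        have : (∑ z, F z a * G z b) ≤ 0 := Finset.sum_nonpos fun z hzz => h z hzz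
        linarith
      have hFz0 : 0 < F z₀ a := by
        rcases lt_or_eq_of_le (hF z₀ a) with h | h
        · exact h
        · rw [← h, zero_mul] at hz₀; linarith
      have hGz0 : 0 < G z₀ b := by
        rcases lt_or_eq_of_le (hG z₀ b) with h | h
        · exact h
        · rw [← h, mul_zero] at hz₀; linarith
      have hpX : 0 < ∑ z, F z a :=
        lt_of_lt_of_le hFz0 (Finset.single_le_sum (fun z _ => hF z a) (mem_univ z₀))
      have hlamz0 : 0 < lam z₀ :=
        lt_of_lt_of_le hFz0 (Finset.single_le_sum (fun a' _ => hF z₀ a') (mem_univ a))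
      have hpY : 0 < ∑ z, lam z * G z b :=
        lt_of_lt_of_le (mul_pos hlamz0 hGz0)
          (Finset.single_le_sum (fun z _ => mul_nonneg (hlam0 z) (hG z b)) (mem_univ z₀))
      set P := ∑ z, F z a * G z b with hPdef
      set pX := ∑ z, F z a with hpXdef
      set pY := ∑ z, lam z * G z b with hpYdef
      have hsum : ∑ z, (F z a * G z b) * lam z ≤ pX * pY := by
        calc ∑ z, (F z a * G z b) * lam z ≤ ∑ z, pX * (lam z * G z b) := by
              apply Finset.sum_le_sum
              intro z _
              have hle : F z a ≤ pX := Finset.single_le_sum (fun z _ => hF z a) (mem_univ z)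
              nlinarith [mul_nonneg (mul_nonneg (sub_nonneg.2 hle) (hlam0 z)) (hG z b)]
          _ = pX * pY := by rw [← Finset.mul_sum]
      have key : ∀ z, (F z a * G z b) * Real.log (P / (pX * pY)) ≤
          F z a * G z b * Real.log (1 / lam z)
            + (F z a * G z b) * (P * lam z / (pX * pY) - 1) := by
        intro z
        by_cases hz : F z a * G z b = 0
        · rw [hz]; simp
        · have hFG : 0 < F z a * G z b :=
            lt_of_le_of_ne (mul_nonneg (hF z a) (hG z b)) (Ne.symm hz)
          have hFz : 0 < F z a := by
            rcases lt_or_eq_of_le (hF z a) with h | h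
            · exact h
            · rw [← h, zero_mul] at hFG; linarith
          have hlz : 0 < lam z :=
            lt_of_lt_of_le hFz (Finset.single_le_sum (fun a' _ => hF z a') (mem_univ a))
          have hlog : Real.log (P / (pX * pY)) =
              Real.log (1 / lam z) + Real.log (P * lam z / (pX * pY)) := by
            rw [Real.log_div (ne_of_gt hPpos) (by positivity),
              one_div, Real.log_inv,
              Real.log_div (by positivity) (by positivity),
              Real.log_mul (ne_of_gt hPpos) (ne_of_gt hlz)]
            ring
          have hle : Real.log (P * lam z / (pX * pY)) ≤ P * lam z / (pX * pY) - 1 :=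
            Real.log_le_sub_one_of_pos (by positivity)
          rw [hlog, mul_add]
          have := mul_le_mul_of_nonneg_left hle (le_of_lt hFG)
          linarith
      calc P * Real.log (P / (pX * pY)) = ∑ z, (F z a * G z b) * Real.log (P / (pX * pY)) := by
            rw [← Finset.sum_mul]
        _ ≤ ∑ z, (F z a * G z b * Real.log (1 / lam z)
              + (F z a * G z b) * (P * lam z / (pX * pY) - 1)) :=
            Finset.sum_le_sum fun z _ => key z
        _ = (∑ z, F z a * G z b * Real.log (1 / lam z))
              + ((∑ z, F z a * G z b * lam z) * (P / (pX * pY)) - P) := by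
            rw [Finset.sum_add_distrib]
            refine congrArg _ ?_
            have e1 : ∀ z : γ, F z a * G z b * (P * lam z / (pX * pY) - 1)
                = F z a * G z b * lam z * (P / (pX * pY)) - F z a * G z b := fun z => by
              ring
            simp_rw [e1]
            rw [Finset.sum_sub_distrib, ← Finset.sum_mul, ← hPdef]
        _ ≤ (∑ z, F z a * G z b * Real.log (1 / lam z)) + 0 := by
            gcongr
            have h2 : (∑ z, F z a * G z b * lam z) * (P / (pX * pY))
                ≤ (pX * pY) * (P / (pX * pY)) :=
              mul_le_mul_of_nonneg_right hsum (by positivity)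
            have h3 : (pX * pY) * (P / (pX * pY)) = P := by
              field_simp
            linarith
        _ = ∑ z, F z a * G z b * Real.log (1 / lam z) := add_zero _
  calc ∑ a, ∑ b, (if (∑ z, F z a * G z b) = 0 then 0 else
      (∑ z, F z a * G z b) *
        Real.log ((∑ z, F z a * G z b) /
          ((∑ z, F z a) * (∑ z, (∑ a', F z a') * G z b))))
      ≤ ∑ a, ∑ b, ∑ z, F z a * G z b * Real.log (1 / lam z) :=
        Finset.sum_le_sum fun a _ => Finset.sum_le_sum fun b _ => step1 a b
    _ = ∑ z, lam z * Real.log (1 / lam z) := by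
        rw [Finset.sum_comm]
        have h1 : ∀ b, ∑ a, ∑ z, F z a * G z b * Real.log (1 / lam z)
            = ∑ z, ∑ a, F z a * G z b * Real.log (1 / lam z) := fun b => Finset.sum_comm
        simp_rw [h1]
        rw [Finset.sum_comm]
        apply Finset.sum_congr rfl
        intro z _
        calc ∑ b, ∑ a, F z a * G z b * Real.log (1 / lam z)
            = ∑ b, (∑ a, F z a) * (G z b * Real.log (1 / lam z)) := by
              apply Finset.sum_congr rfl
              intro b _
              rw [Finset.sum_mul]
              apply Finset.sum_congr rfl
              intro a _
              ring
          _ = lam z * ((∑ b, G z b) * Real.log (1 / lam z)) := by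
              rw [← Finset.mul_sum, ← Finset.sum_mul]
          _ = lam z * Real.log (1 / lam z) := by rw [hG1, one_mul]
    _ ≤ Real.log (Fintype.card γ) := entropy_le_log_card lam hlam0 hF1



open Finset

lemma happ {n : ℕ} {γ : Type*} (u : Fin n → γ) {i j : Fin n} (h : i.val = j.val) : u i = u j :=
  congrArg u (Fin.ext h)

def ePE {T : ℕ} (t : Fin (T + 1)) : Fin (t.val + 1) ≃ {i : Fin (T + 1) // i.val ≤ t.val} where
  toFun k := ⟨⟨k.val, by have := k.isLt; have := t.isLt; omega⟩, by
    show k.val ≤ t.val; have := k.isLt; omega⟩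
  invFun j := ⟨j.1.val, by have := j.2; omega⟩
  left_inv k := by apply Fin.ext; rfl
  right_inv j := by apply Subtype.ext; apply Fin.ext; rfl

def eSE {T : ℕ} (t : Fin (T + 1)) : Fin (T - t.val) ≃ {i : Fin (T + 1) // t.val < i.val} where
  toFun k := ⟨⟨t.val + 1 + k.val, by have := k.isLt; omega⟩, by
    show t.val < t.val + 1 + k.val; omega⟩
  invFun j := ⟨j.1.val - t.val - 1, by have := j.1.isLt; have := j.2; omega⟩
  left_inv k := by apply Fin.ext; show t.val + 1 + k.val - t.val - 1 = k.val; omega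
  right_inv j := by
    apply Subtype.ext; apply Fin.ext
    show t.val + 1 + (j.1.val - t.val - 1) = j.1.val
    have := j.2; omega

def glue {γ : Type*} {T : ℕ} (t : Fin (T + 1)) (a : {i : Fin (T + 1) // i.val ≤ t.val} → γ)
    (b : {i : Fin (T + 1) // t.val < i.val} → γ) : Fin (T + 1) → γ := fun i =>
  if h : i.val ≤ t.val then a ⟨i, h⟩ else b ⟨i, by omega⟩

def glueZ {γ : Type*} {T : ℕ} (t : Fin (T + 1)) (u : Fin (t.val + 1) → γ)
    (v : Fin (T - t.val) → γ) : Fin (T + 1) → γ := fun i =>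
  if h : i.val ≤ t.val then u ⟨i.val, by omega⟩
  else v ⟨i.val - t.val - 1, by have := i.isLt; omega⟩

variable {H V : Type*} [Fintype H] [Fintype V]

def Fpre (M : HMM H V) {T : ℕ} (t : Fin (T + 1)) (z : H)
    (a : {i : Fin (T + 1) // i.val ≤ t.val} → V) : ℝ :=
  ∑ u : Fin (t.val + 1) → H,
    if u (Fin.last t.val) = z then
      M.pi (u 0) * M.B (u 0) (a (ePE t 0)) *
        ∏ i : Fin t.val, (M.A (u i.castSucc) (u i.succ) * M.B (u i.succ) (a (ePE t i.succ)))
    else 0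

def Gsuf (M : HMM H V) {T : ℕ} (t : Fin (T + 1)) (z : H)
    (b : {i : Fin (T + 1) // t.val < i.val} → V) : ℝ :=
  ∑ v : Fin (T - t.val) → H,
    ∏ i : Fin (T - t.val),
      (M.A ((Fin.cons z v : Fin (T - t.val + 1) → H) i.castSucc) (v i) * M.B (v i) (b (eSE t i)))

lemma Fpre_nonneg (M : HMM H V) {T : ℕ} (t : Fin (T + 1)) (z : H)
    (a : {i : Fin (T + 1) // i.val ≤ t.val} → V) : 0 ≤ Fpre M t z a := by
  apply Finset.sum_nonneg
  intro u _
  split_ifs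
  · exact mul_nonneg (mul_nonneg (M.pi_nonneg _) (M.B_nonneg _ _))
      (Finset.prod_nonneg fun i _ => mul_nonneg (M.A_nonneg _ _) (M.B_nonneg _ _))
  · exact le_refl 0

lemma Gsuf_nonneg (M : HMM H V) {T : ℕ} (t : Fin (T + 1)) (z : H)
    (b : {i : Fin (T + 1) // t.val < i.val} → V) : 0 ≤ Gsuf M t z b :=
  Finset.sum_nonneg fun v _ =>
    Finset.prod_nonneg fun i _ => mul_nonneg (M.A_nonneg _ _) (M.B_nonneg _ _)

lemma chain_sum' {H : Type*} [Fintype H] (A : H → H → ℝ)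
    (hA : ∀ z, ∑ z', A z z' = 1) :
    ∀ (r : ℕ) (z : H),
      ∑ v : Fin r → H, ∏ i : Fin r, A ((Fin.cons z v : Fin (r+1) → H) i.castSucc) (v i) = 1 := by
  intro r
  induction r with
  | zero => intro z; simp
  | succ r ih =>
    intro z
    rw [← Equiv.sum_comp (Fin.consEquiv (fun _ : Fin (r + 1) => H)) (fun v : Fin (r + 1) → H =>
      ∏ i : Fin (r + 1), A ((Fin.cons z v : Fin (r+2) → H) i.castSucc) (v i))]
    rw [Fintype.sum_prod_type]
    simp only [Fin.consEquiv_apply]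
    have hstep : ∀ (y : H) (v : Fin r → H),
        (∏ i : Fin (r + 1), A ((Fin.cons z ((Fin.consEquiv fun _ : Fin (r+1) => H) (y, v)) : Fin (r+2) → H) i.castSucc) ((Fin.cons y v : Fin (r+1) → H) i))
        = A z y * ∏ i : Fin r, A ((Fin.cons y v : Fin (r+1) → H) i.castSucc) (v i) := by
      intro y v
      rw [Fin.prod_univ_succ]
      have h0 : A ((Fin.cons z ((Fin.consEquiv fun _ : Fin (r+1) => H) (y, v)) : Fin (r+2) → H) ((0 : Fin (r+1)).castSucc)) ((Fin.cons y v : Fin (r+1) → H) 0) = A z y := by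
        simp
      rw [h0]
      congr 1
    simp_rw [hstep]
    calc ∑ y, ∑ v : Fin r → H, A z y * ∏ i : Fin r, A ((Fin.cons y v : Fin (r+1) → H) i.castSucc) (v i)
        = ∑ y, A z y * ∑ v : Fin r → H, ∏ i : Fin r, A ((Fin.cons y v : Fin (r+1) → H) i.castSucc) (v i) := by
          apply Finset.sum_congr rfl
          intro y _
          rw [Finset.mul_sum]
      _ = ∑ y, A z y * 1 := by
          apply Finset.sum_congr rfl
          intro y _
          rw [ih y]
      _ = 1 := by
          simp_rw [mul_one]
          exact hA z


lemma Gsuf_sum_one (M : HMM H V) {T : ℕ} (t : Fin (T + 1)) (z : H) :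
    ∑ b : {i : Fin (T + 1) // t.val < i.val} → V, Gsuf M t z b = 1 := by
  unfold Gsuf
  rw [Finset.sum_comm]
  have h1 : ∀ v : Fin (T - t.val) → H,
      (∑ b : {i : Fin (T + 1) // t.val < i.val} → V,
        ∏ i : Fin (T - t.val),
          (M.A ((Fin.cons z v : Fin (T - t.val + 1) → H) i.castSucc) (v i)
            * M.B (v i) (b (eSE t i))))
      = ∏ i : Fin (T - t.val),
          M.A ((Fin.cons z v : Fin (T - t.val + 1) → H) i.castSucc) (v i) := by
    intro v
    rw [← Equiv.sum_comp (Equiv.arrowCongr (eSE (T := T) t) (Equiv.refl V))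
      (fun b : {i : Fin (T + 1) // t.val < i.val} → V =>
        ∏ i : Fin (T - t.val),
          (M.A ((Fin.cons z v : Fin (T - t.val + 1) → H) i.castSucc) (v i)
            * M.B (v i) (b (eSE t i))))]
    have h2 : ∀ c : Fin (T - t.val) → V,
        (∏ i : Fin (T - t.val),
          (M.A ((Fin.cons z v : Fin (T - t.val + 1) → H) i.castSucc) (v i)
            * M.B (v i) ((Equiv.arrowCongr (eSE (T := T) t) (Equiv.refl V) c) (eSE t i))))
        = ∏ i : Fin (T - t.val),
          (M.A ((Fin.cons z v : Fin (T - t.val + 1) → H) i.castSucc) (v i)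
            * M.B (v i) (c i)) := by
      intro c
      apply Finset.prod_congr rfl
      intro i _
      simp
    simp_rw [h2]
    rw [← Fintype.prod_sum (f := fun (i : Fin (T - t.val)) (x : V) =>
      M.A ((Fin.cons z v : Fin (T - t.val + 1) → H) i.castSucc) (v i) * M.B (v i) x)]
    apply Finset.prod_congr rfl
    intro i _
    rw [← Finset.mul_sum, M.B_row_sum_one, mul_one]
  simp_rw [h1]
  exact chain_sum' M.A M.A_row_sum_one (T - t.val) z

lemma Fpre_sum_one (M : HMM H V) {T : ℕ} (t : Fin (T + 1)) :
    ∑ z : H, ∑ a : {i : Fin (T + 1) // i.val ≤ t.val} → V, Fpre M t z a = 1 := by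
  unfold Fpre
  rw [Finset.sum_comm]
  -- now : ∑ a ∑ z ∑ u ite
  have hz : ∀ (a : {i : Fin (T + 1) // i.val ≤ t.val} → V),
      (∑ z : H, ∑ u : Fin (t.val + 1) → H,
        if u (Fin.last t.val) = z then
          M.pi (u 0) * M.B (u 0) (a (ePE t 0)) *
            ∏ i : Fin t.val, (M.A (u i.castSucc) (u i.succ) * M.B (u i.succ) (a (ePE t i.succ)))
        else 0)
      = ∑ u : Fin (t.val + 1) → H,
          M.pi (u 0) * M.B (u 0) (a (ePE t 0)) *
            ∏ i : Fin t.val, (M.A (u i.castSucc) (u i.succ) * M.B (u i.succ) (a (ePE t i.succ))) := by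
    intro a
    rw [Finset.sum_comm]
    apply Finset.sum_congr rfl
    intro u _
    rw [Finset.sum_ite_eq univ (u (Fin.last t.val))]
    simp
  simp_rw [hz]
  rw [Finset.sum_comm]
  -- per u, sum over a
  have ha : ∀ u : Fin (t.val + 1) → H,
      (∑ a : {i : Fin (T + 1) // i.val ≤ t.val} → V,
        M.pi (u 0) * M.B (u 0) (a (ePE t 0)) *
          ∏ i : Fin t.val, (M.A (u i.castSucc) (u i.succ) * M.B (u i.succ) (a (ePE t i.succ))))
      = M.pi (u 0) * ∏ i : Fin t.val, M.A (u i.castSucc) (u i.succ) := by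
    intro u
    rw [← Equiv.sum_comp (Equiv.arrowCongr (ePE (T := T) t) (Equiv.refl V))
      (fun a : {i : Fin (T + 1) // i.val ≤ t.val} → V =>
        M.pi (u 0) * M.B (u 0) (a (ePE t 0)) *
          ∏ i : Fin t.val, (M.A (u i.castSucc) (u i.succ) * M.B (u i.succ) (a (ePE t i.succ))))]
    have h2 : ∀ c : Fin (t.val + 1) → V,
        (M.pi (u 0) * M.B (u 0) ((Equiv.arrowCongr (ePE (T := T) t) (Equiv.refl V) c) (ePE t 0)) *
          ∏ i : Fin t.val, (M.A (u i.castSucc) (u i.succ)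
            * M.B (u i.succ) ((Equiv.arrowCongr (ePE (T := T) t) (Equiv.refl V) c) (ePE t i.succ))))
        = M.pi (u 0) *
            ∏ j : Fin (t.val + 1),
              (Fin.cases (fun x => M.B (u 0) x)
                (fun i (x : V) => M.A (u i.castSucc) (u i.succ) * M.B (u i.succ) x) j : V → ℝ)
                (c j) := by
      intro c
      rw [Fin.prod_univ_succ]
      simp only [Fin.cases_zero, Fin.cases_succ, Equiv.arrowCongr_apply, Equiv.refl_apply,
        Function.comp_apply, Equiv.symm_apply_apply]
      ring
    simp_rw [h2]
    rw [← Finset.mul_sum, ← Fintype.prod_sum (f := fun (j : Fin (t.val + 1)) (x : V) =>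
      (Fin.cases (fun x => M.B (u 0) x)
        (fun i (x : V) => M.A (u i.castSucc) (u i.succ) * M.B (u i.succ) x) j : V → ℝ) x)]
    rw [Fin.prod_univ_succ]
    simp only [Fin.cases_zero, Fin.cases_succ]
    rw [M.B_row_sum_one, one_mul]
    congr 1
    apply Finset.prod_congr rfl
    intro i _
    rw [← Finset.mul_sum, M.B_row_sum_one, mul_one]
  simp_rw [ha]
  -- peel first coordinate
  rw [← Equiv.sum_comp (Fin.consEquiv (fun _ : Fin (t.val + 1) => H))
    (fun u : Fin (t.val + 1) → H => M.pi (u 0) * ∏ i : Fin t.val, M.A (u i.castSucc) (u i.succ))]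
  rw [Fintype.sum_prod_type]
  have hc : ∀ (y : H) (w : Fin t.val → H),
      (M.pi ((Fin.consEquiv (fun _ : Fin (t.val + 1) => H)) (y, w) 0) *
        ∏ i : Fin t.val, M.A (((Fin.consEquiv (fun _ : Fin (t.val + 1) => H)) (y, w)) i.castSucc)
          (((Fin.consEquiv (fun _ : Fin (t.val + 1) => H)) (y, w)) i.succ))
      = M.pi y * ∏ i : Fin t.val,
          M.A ((Fin.cons y w : Fin (t.val + 1) → H) i.castSucc) (w i) := by
    intro y w
    simp [Fin.consEquiv_apply, Fin.cons_succ]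
  simp_rw [hc]
  have : ∀ y : H,
      (∑ w : Fin t.val → H, M.pi y * ∏ i : Fin t.val,
        M.A ((Fin.cons y w : Fin (t.val + 1) → H) i.castSucc) (w i))
      = M.pi y := by
    intro y
    rw [← Finset.mul_sum, chain_sum' M.A M.A_row_sum_one t.val y, mul_one]
  simp_rw [this]
  exact M.pi_sum_one

lemma glueZ_le {γ : Type*} {T : ℕ} (t : Fin (T + 1)) (u : Fin (t.val + 1) → γ)
    (v : Fin (T - t.val) → γ) (i : Fin (T + 1)) (h : i.val ≤ t.val) :
    glueZ t u v i = u ⟨i.val, by omega⟩ := by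
  unfold glueZ; rw [dif_pos h]

lemma glueZ_gt {γ : Type*} {T : ℕ} (t : Fin (T + 1)) (u : Fin (t.val + 1) → γ)
    (v : Fin (T - t.val) → γ) (i : Fin (T + 1)) (h : ¬ i.val ≤ t.val) :
    glueZ t u v i = v ⟨i.val - t.val - 1, by have := i.isLt; omega⟩ := by
  unfold glueZ; rw [dif_neg h]

lemma glue_le {γ : Type*} {T : ℕ} (t : Fin (T + 1)) (a : {i : Fin (T + 1) // i.val ≤ t.val} → γ)
    (b : {i : Fin (T + 1) // t.val < i.val} → γ) (i : Fin (T + 1)) (h : i.val ≤ t.val) :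
    glue t a b i = a ⟨i, h⟩ := by
  unfold glue; rw [dif_pos h]

lemma glue_gt {γ : Type*} {T : ℕ} (t : Fin (T + 1)) (a : {i : Fin (T + 1) // i.val ≤ t.val} → γ)
    (b : {i : Fin (T + 1) // t.val < i.val} → γ) (i : Fin (T + 1)) (h : ¬ i.val ≤ t.val) :
    glue t a b i = b ⟨i, by omega⟩ := by
  unfold glue; rw [dif_neg h]

lemma glue_cond {γ : Type*} {T : ℕ} (t : Fin (T + 1)) (a : {i : Fin (T + 1) // i.val ≤ t.val} → γ)
    (b : {i : Fin (T + 1) // t.val < i.val} → γ) (x : Fin (T + 1) → γ) :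
    (((fun i : {i : Fin (T + 1) // i.val ≤ t.val} => x i.1),
      (fun i : {i : Fin (T + 1) // t.val < i.val} => x i.1)) = (a, b)) ↔ x = glue t a b := by
  constructor
  · intro h
    rw [Prod.mk.injEq] at h
    obtain ⟨h1, h2⟩ := h
    funext i
    by_cases hi : i.val ≤ t.val
    · rw [glue_le t a b i hi]
      exact congrFun h1 ⟨i, hi⟩
    · rw [glue_gt t a b i hi]
      exact congrFun h2 ⟨i, by omega⟩
  · intro h
    subst h
    rw [Prod.mk.injEq]
    constructor
    · funext i
      show glue t a b i.1 = a i
      rw [glue_le t a b i.1 i.2]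
    · funext i
      show glue t a b i.1 = b i
      rw [glue_gt t a b i.1 (by have := i.2; omega)]

lemma glueZ_bijective {T : ℕ} (t : Fin (T + 1)) :
    Function.Bijective (fun p : (Fin (t.val + 1) → H) × (Fin (T - t.val) → H) =>
      glueZ t p.1 p.2) := by
  rw [Function.bijective_iff_has_inverse]
  refine ⟨fun zf => (fun k => zf ⟨k.val, by have := k.isLt; have := t.isLt; omega⟩,
    fun k => zf ⟨t.val + 1 + k.val, by have := k.isLt; omega⟩), ?_, ?_⟩
  · rintro ⟨u, v⟩
    dsimp only
    rw [Prod.mk.injEq]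
    constructor
    · funext k
      rw [glueZ_le t u v _ (show k.val ≤ t.val by have := k.isLt; omega)]
    · funext k
      rw [glueZ_gt t u v _ (show ¬ (t.val + 1 + k.val ≤ t.val) by omega)]
      exact happ v (show t.val + 1 + k.val - t.val - 1 = k.val by omega)
  · intro zf
    funext i
    dsimp only
    by_cases hi : i.val ≤ t.val
    · rw [glueZ_le t _ _ i hi]
    · rw [glueZ_gt t _ _ i hi]
      exact happ zf (show t.val + 1 + (i.val - t.val - 1) = i.val by omega)

lemma sum_glueZ {T : ℕ} (t : Fin (T + 1)) (f : (Fin (T + 1) → H) → ℝ) :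
    (∑ zf : Fin (T + 1) → H, f zf)
    = ∑ u : Fin (t.val + 1) → H, ∑ v : Fin (T - t.val) → H, f (glueZ t u v) := by
  rw [← Fintype.sum_bijective _ (glueZ_bijective (H := H) t)
    (fun p => f (glueZ t p.1 p.2)) f (fun p => rfl)]
  rw [Fintype.sum_prod_type]

variable {V : Type*} [Fintype V]

lemma joint_glue (M : HMM H V) {T : ℕ} (t : Fin (T + 1))
    (u : Fin (t.val + 1) → H) (v : Fin (T - t.val) → H)
    (a : {i : Fin (T + 1) // i.val ≤ t.val} → V)
    (b : {i : Fin (T + 1) // t.val < i.val} → V) :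
    M.joint T (glueZ t u v) (glue t a b)
      = (M.pi (u 0) * M.B (u 0) (a (ePE t 0)) *
          ∏ i : Fin t.val, (M.A (u i.castSucc) (u i.succ) * M.B (u i.succ) (a (ePE t i.succ))))
        * ∏ i : Fin (T - t.val),
            (M.A ((Fin.cons (u (Fin.last t.val)) v : Fin (T - t.val + 1) → H) i.castSucc) (v i)
              * M.B (v i) (b (eSE t i))) := by
  have htT : t.val ≤ T := by have := t.isLt; omega
  rw [HMM.joint]
  have h0z : glueZ t u v 0 = u 0 := by
    rw [glueZ_le t u v 0 (by simp)]
    exact happ u (by simp)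
  have h0x : glue t a b 0 = a (ePE t 0) := by
    rw [glue_le t a b 0 (by simp)]
    exact congrArg a (Subtype.ext (Fin.ext (by simp [ePE])))
  rw [h0z, h0x]
  set fN : ℕ → ℝ := fun k =>
    if h : k < T then
      M.A (glueZ t u v ⟨k, by omega⟩) (glueZ t u v ⟨k + 1, by omega⟩)
        * M.B (glueZ t u v ⟨k + 1, by omega⟩) (glue t a b ⟨k + 1, by omega⟩)
    else 1 with hfN
  have e0 : (∏ i : Fin T, (M.A (glueZ t u v i.castSucc) (glueZ t u v i.succ)
      * M.B (glueZ t u v i.succ) (glue t a b i.succ)))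
      = ∏ k ∈ Finset.range T, fN k := by
    rw [← Fin.prod_univ_eq_prod_range]
    apply Finset.prod_congr rfl
    intro i _
    simp only [hfN]
    rw [dif_pos i.isLt]
    rw [show glueZ t u v i.castSucc = glueZ t u v ⟨i.val, by have := i.isLt; omega⟩ from
        happ _ (by simp),
      show glueZ t u v i.succ = glueZ t u v ⟨i.val + 1, by have := i.isLt; omega⟩ from
        happ _ (by simp),
      show glue t a b i.succ = glue t a b ⟨i.val + 1, by have := i.isLt; omega⟩ from
        happ _ (by simp)]
  rw [e0, show Finset.range T = Finset.range (t.val + (T - t.val)) from by rw [Nat.add_sub_cancel' htT],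
    Finset.prod_range_add]
  have hpre : (∏ k ∈ Finset.range t.val, fN k)
      = ∏ i : Fin t.val, (M.A (u i.castSucc) (u i.succ) * M.B (u i.succ) (a (ePE t i.succ))) := by
    rw [← Fin.prod_univ_eq_prod_range fN t.val]
    apply Finset.prod_congr rfl
    intro i _
    have hiT : i.val < T := by have := i.isLt; omega
    simp only [hfN]
    rw [dif_pos hiT]
    rw [glueZ_le t u v ⟨i.val, by omega⟩ (show i.val ≤ t.val by have := i.isLt; omega),
      glueZ_le t u v ⟨i.val + 1, by omega⟩ (show i.val + 1 ≤ t.val by have := i.isLt; omega),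
      glue_le t a b ⟨i.val + 1, by omega⟩ (show i.val + 1 ≤ t.val by have := i.isLt; omega)]
    rfl
  have hsuf : (∏ k ∈ Finset.range (T - t.val), fN (t.val + k))
      = ∏ i : Fin (T - t.val),
          (M.A ((Fin.cons (u (Fin.last t.val)) v : Fin (T - t.val + 1) → H) i.castSucc) (v i)
            * M.B (v i) (b (eSE t i))) := by
    rw [← Fin.prod_univ_eq_prod_range (fun k => fN (t.val + k)) (T - t.val)]
    apply Finset.prod_congr rfl
    intro i _
    have hiT : t.val + i.val < T := by have := i.isLt; omega
    simp only [hfN]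
    rw [dif_pos hiT]
    rw [glueZ_gt t u v ⟨t.val + i.val + 1, by omega⟩ (show ¬ (t.val + i.val + 1 ≤ t.val) by omega),
      glue_gt t a b ⟨t.val + i.val + 1, by omega⟩ (show ¬ (t.val + i.val + 1 ≤ t.val) by omega)]
    have hv : v ⟨t.val + i.val + 1 - t.val - 1, by have := i.isLt; omega⟩ = v i :=
      happ v (show t.val + i.val + 1 - t.val - 1 = i.val by omega)
    rw [hv]
    have hb : b ⟨⟨t.val + i.val + 1, by omega⟩, by show t.val < t.val + i.val + 1; omega⟩
        = b (eSE t i) :=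
      congrArg b (Subtype.ext (Fin.ext (by simp [eSE]; omega)))
    rw [hb]
    rcases Nat.eq_zero_or_pos i.val with hi0 | hipos
    · rw [glueZ_le t u v ⟨t.val + i.val, by omega⟩ (show t.val + i.val ≤ t.val by omega)]
      have hc : (Fin.cons (u (Fin.last t.val)) v : Fin (T - t.val + 1) → H) i.castSucc
          = u (Fin.last t.val) := by
        rw [show i.castSucc = 0 from Fin.ext (by simp [hi0])]
        simp
      rw [hc]
      congr 2
      exact happ u (by simp [hi0])
    · rw [glueZ_gt t u v ⟨t.val + i.val, by omega⟩ (show ¬ (t.val + i.val ≤ t.val) by omega)]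
      have hc : (Fin.cons (u (Fin.last t.val)) v : Fin (T - t.val + 1) → H) i.castSucc
          = v ⟨i.val - 1, by have := i.isLt; omega⟩ := by
        rw [show i.castSucc = Fin.succ ⟨i.val - 1, by have := i.isLt; omega⟩ from
          Fin.ext (by simp; omega)]
        rw [Fin.cons_succ]
      rw [hc]
      congr 2
      exact happ v (show t.val + i.val - t.val - 1 = i.val - 1 by omega)
  rw [hpre, hsuf, ← mul_assoc]

lemma pair_prob (M : HMM H V) (T : ℕ) (t : Fin (T + 1))
    (a : {i : Fin (T + 1) // i.val ≤ t.val} → V) (b : {i : Fin (T + 1) // t.val < i.val} → V) :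
    prOf (fun ω : (Fin (T + 1) → H) × (Fin (T + 1) → V) => M.joint T ω.1 ω.2)
      (fun ω => ((fun i : {i : Fin (T + 1) // i.val ≤ t.val} => ω.2 i.1),
                 (fun i : {i : Fin (T + 1) // t.val < i.val} => ω.2 i.1))) (a, b)
    = ∑ z : H, Fpre M t z a * Gsuf M t z b := by
  unfold prOf
  rw [Fintype.sum_prod_type]
  dsimp only
  refine Eq.trans (Finset.sum_congr rfl (fun zf _ =>
    show _ = M.joint T zf (glue t a b) from ?_)) ?_
  · refine Eq.trans (Finset.sum_congr rfl (fun xf _ =>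
      show _ = (if xf = glue t a b then M.joint T zf xf else 0) from ?_)) ?_
    · by_cases h : xf = glue t a b
      · rw [if_pos ((glue_cond t a b xf).mpr h), if_pos h]
      · rw [if_neg (fun hc => h ((glue_cond t a b xf).mp hc)), if_neg h]
    · rw [Finset.sum_ite_eq' Finset.univ (glue t a b) (fun xf => M.joint T zf xf)]
      simp
  · rw [sum_glueZ t (fun zf => M.joint T zf (glue t a b))]
    have hj : ∀ u : Fin (t.val + 1) → H,
        (∑ v : Fin (T - t.val) → H, M.joint T (glueZ t u v) (glue t a b))
        = (M.pi (u 0) * M.B (u 0) (a (ePE t 0)) *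
            ∏ i : Fin t.val, (M.A (u i.castSucc) (u i.succ) * M.B (u i.succ) (a (ePE t i.succ))))
          * Gsuf M t (u (Fin.last t.val)) b := by
      intro u
      rw [Finset.sum_congr rfl (fun v _ => joint_glue M t u v a b)]
      rw [← Finset.mul_sum]
      rfl
    rw [Finset.sum_congr rfl (fun u _ => hj u)]
    have hsplit : ∀ u : Fin (t.val + 1) → H,
        (M.pi (u 0) * M.B (u 0) (a (ePE t 0)) *
            ∏ i : Fin t.val, (M.A (u i.castSucc) (u i.succ) * M.B (u i.succ) (a (ePE t i.succ))))
          * Gsuf M t (u (Fin.last t.val)) b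
        = ∑ z : H, (if u (Fin.last t.val) = z then
            M.pi (u 0) * M.B (u 0) (a (ePE t 0)) *
              ∏ i : Fin t.val, (M.A (u i.castSucc) (u i.succ) * M.B (u i.succ) (a (ePE t i.succ)))
          else 0) * Gsuf M t z b := by
      intro u
      have h1 : ∀ z : H,
          (if u (Fin.last t.val) = z then
            M.pi (u 0) * M.B (u 0) (a (ePE t 0)) *
              ∏ i : Fin t.val, (M.A (u i.castSucc) (u i.succ) * M.B (u i.succ) (a (ePE t i.succ)))
          else 0) * Gsuf M t z b
          = (if u (Fin.last t.val) = z then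
              (M.pi (u 0) * M.B (u 0) (a (ePE t 0)) *
                ∏ i : Fin t.val, (M.A (u i.castSucc) (u i.succ) * M.B (u i.succ) (a (ePE t i.succ))))
                * Gsuf M t z b
            else 0) := by
        intro z
        split_ifs <;> simp
      rw [Finset.sum_congr rfl (fun z _ => h1 z)]
      rw [Finset.sum_ite_eq Finset.univ (u (Fin.last t.val))]
      simp
    rw [Finset.sum_congr rfl (fun u _ => hsplit u)]
    rw [Finset.sum_comm]
    apply Finset.sum_congr rfl
    intro z _
    rw [Fpre, Finset.sum_mul]


lemma prOf_fst {Ω α β : Type*} [Fintype Ω] [Fintype α] [Fintype β]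
    (p : Ω → ℝ) (X : Ω → α) (Y : Ω → β) (a : α) :
    prOf p X a = ∑ b : β, prOf p (fun ω => (X ω, Y ω)) (a, b) := by
  unfold prOf
  rw [Finset.sum_comm]
  apply Finset.sum_congr rfl
  intro ω _
  by_cases hc : X ω = a
  · simp [hc, Prod.ext_iff]
  · simp [hc, Prod.ext_iff]

lemma prOf_snd {Ω α β : Type*} [Fintype Ω] [Fintype α] [Fintype β]
    (p : Ω → ℝ) (X : Ω → α) (Y : Ω → β) (b : β) :
    prOf p Y b = ∑ a : α, prOf p (fun ω => (X ω, Y ω)) (a, b) := by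
  unfold prOf
  rw [Finset.sum_comm]
  apply Finset.sum_congr rfl
  intro ω _
  by_cases hc : Y ω = b
  · simp [hc, Prod.ext_iff]
  · simp [hc, Prod.ext_iff]


end HMMaux

/-- For a hidden Markov model whose hidden-state set has cardinality `|H|`
(positions indexed `0, …, T`), for every position `t` the mutual information
between the prefix `X_{0:t}` and the suffix `X_{t+1:T}` of the observation
sequence (under the joint HMM distribution over latent states and tokens) is
bounded by the logarithm of the hidden size: `I(X_{0:t}; X_{t+1:T}) ≤ log |H|`. -/
theorem hmm_mutualInfo_prefix_suffix_le_log_card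
    {H V : Type*} [Fintype H] [Fintype V]
    (M : HMM H V) (T : ℕ) (t : Fin (T + 1)) :
    mutualInfo (fun ω : (Fin (T + 1) → H) × (Fin (T + 1) → V) => M.joint T ω.1 ω.2)
      (fun ω => (fun i : {i : Fin (T + 1) // i.val ≤ t.val} => ω.2 i.1))
      (fun ω => (fun i : {i : Fin (T + 1) // t.val < i.val} => ω.2 i.1))
    ≤ Real.log (Fintype.card H) := by
  classical
  have hpair := HMMaux.pair_prob M T t
  have hXa : ∀ a : {i : Fin (T + 1) // i.val ≤ t.val} → V,
      prOf (fun ω : (Fin (T + 1) → H) × (Fin (T + 1) → V) => M.joint T ω.1 ω.2)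
        (fun ω => (fun i : {i : Fin (T + 1) // i.val ≤ t.val} => ω.2 i.1)) a
      = ∑ z : H, HMMaux.Fpre M t z a := by
    intro a
    rw [HMMaux.prOf_fst (fun ω : (Fin (T + 1) → H) × (Fin (T + 1) → V) => M.joint T ω.1 ω.2)
      (fun ω => (fun i : {i : Fin (T + 1) // i.val ≤ t.val} => ω.2 i.1))
      (fun ω => (fun i : {i : Fin (T + 1) // t.val < i.val} => ω.2 i.1)) a]
    rw [Finset.sum_congr rfl (fun b _ => hpair a b)]
    rw [Finset.sum_comm]
    apply Finset.sum_congr rfl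
    intro z _
    rw [← Finset.mul_sum, HMMaux.Gsuf_sum_one M t z, mul_one]
  have hYb : ∀ b : {i : Fin (T + 1) // t.val < i.val} → V,
      prOf (fun ω : (Fin (T + 1) → H) × (Fin (T + 1) → V) => M.joint T ω.1 ω.2)
        (fun ω => (fun i : {i : Fin (T + 1) // t.val < i.val} => ω.2 i.1)) b
      = ∑ z : H, (∑ a' : {i : Fin (T + 1) // i.val ≤ t.val} → V, HMMaux.Fpre M t z a')
          * HMMaux.Gsuf M t z b := by
    intro b
    rw [HMMaux.prOf_snd (fun ω : (Fin (T + 1) → H) × (Fin (T + 1) → V) => M.joint T ω.1 ω.2)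
      (fun ω => (fun i : {i : Fin (T + 1) // i.val ≤ t.val} => ω.2 i.1))
      (fun ω => (fun i : {i : Fin (T + 1) // t.val < i.val} => ω.2 i.1)) b]
    rw [Finset.sum_congr rfl (fun a _ => hpair a b)]
    rw [Finset.sum_comm]
    apply Finset.sum_congr rfl
    intro z _
    rw [← Finset.sum_mul]
  unfold mutualInfo
  simp_rw [hpair, hXa, hYb]
  exact HMMaux.key_info (HMMaux.Fpre M t) (HMMaux.Gsuf M t)
    (fun z a => HMMaux.Fpre_nonneg M t z a)
    (fun z b => HMMaux.Gsuf_nonneg M t z b)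
    (HMMaux.Gsuf_sum_one M t) (HMMaux.Fpre_sum_one M t)
    HMMaux.entropy_le_log_card
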